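/- arXiv:2403.18942 — 9 statements merged into one kernel-verified Lean document; each statement's English description precedes it below -/
import Mathlib

section
/- Let H(z) = R z⁻¹ + V + T z be the symbol with R, T invertible L×L matrices and 𝒯^E the transfer matrix. Then for every z ∈ ℂ \ {0}, det(𝒯^E − z·1) = z^L · det(T)⁻¹ · det(H(z) − E·1). In particular, z is an eigenvalue of 𝒯^E if and only if det(H(z) − E·1) = 0. -/
open Matrix

noncomputable section

/-- The transfer matrix `𝒯^E` built from blocks `((E·1 − V)T⁻¹, −R; T⁻¹, 0)`. -/
def transferMatrix {L : ℕ} (R V T : Matrix (Fin L) (Fin L) ℂ) (E : ℂ) :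
    Matrix (Fin L ⊕ Fin L) (Fin L ⊕ Fin L) ℂ :=
  Matrix.fromBlocks ((E • (1 : Matrix (Fin L) (Fin L) ℂ) - V) * T⁻¹) (-R) T⁻¹ 0

/-- The symbol `H(z) = R z⁻¹ + V + T z`. -/
def symbol {L : ℕ} (R V T : Matrix (Fin L) (Fin L) ℂ) (z : ℂ) :
    Matrix (Fin L) (Fin L) ℂ :=
  z⁻¹ • R + V + z • T

theorem det_transferMatrix_sub_smul_one (L : ℕ) (hL : 1 ≤ L)
    (R V T : Matrix (Fin L) (Fin L) ℂ)
    (hR : IsUnit R.det) (hT : IsUnit T.det) (E : ℂ) (z : ℂ) (hz : z ≠ 0) :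
    (transferMatrix R V T E - z • 1).det
        = z ^ L * (T.det)⁻¹ * (symbol R V T z - E • 1).det ∧
      (z ∈ spectrum ℂ (transferMatrix R V T E) ↔ (symbol R V T z - E • 1).det = 0) := by
  have hTinv : T * T⁻¹ = 1 := Matrix.mul_nonsing_inv T hT
  have key : (transferMatrix R V T E - z • 1).det
      = z ^ L * (T.det)⁻¹ * (symbol R V T z - E • 1).det := by
    have h1 : transferMatrix R V T E - z • 1
        = Matrix.fromBlocks ((E • (1 : Matrix (Fin L) (Fin L) ℂ) - V) * T⁻¹ - z • 1)
            (-R) T⁻¹ ((-z) • 1) := by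
      rw [transferMatrix, ← Matrix.fromBlocks_one (l := Fin L) (m := Fin L),
        Matrix.fromBlocks_smul, sub_eq_add_neg, Matrix.fromBlocks_neg, Matrix.fromBlocks_add]
      congr 1 <;> simp [sub_eq_add_neg]
    have hD : IsUnit ((-z) • (1 : Matrix (Fin L) (Fin L) ℂ)).det := by
      rw [Matrix.det_smul, Matrix.det_one, mul_one]
      exact (isUnit_iff_ne_zero).mpr (pow_ne_zero _ (neg_ne_zero.mpr hz))
    haveI := hD.invertible
    haveI : Invertible ((-z) • (1 : Matrix (Fin L) (Fin L) ℂ)) :=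
      (Matrix.isUnit_iff_isUnit_det _).mpr hD |>.invertible
    rw [h1, Matrix.det_fromBlocks₂₂, Matrix.invOf_eq_nonsing_inv]
    have hinv : ((-z) • (1 : Matrix (Fin L) (Fin L) ℂ))⁻¹ = (-z)⁻¹ • 1 := by
      apply Matrix.inv_eq_right_inv
      rw [Matrix.smul_mul, Matrix.mul_smul, Matrix.one_mul, smul_smul,
        mul_inv_cancel₀ (neg_ne_zero.mpr hz), one_smul]
    rw [hinv]
    have h2 : (E • (1 : Matrix (Fin L) (Fin L) ℂ) - V) * T⁻¹ - z • 1 -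
        (-R) * ((-z)⁻¹ • (1 : Matrix (Fin L) (Fin L) ℂ)) * T⁻¹
        = (-(symbol R V T z - E • 1)) * T⁻¹ := by
      have hz1 : (z • (1 : Matrix (Fin L) (Fin L) ℂ)) = (z • T) * T⁻¹ := by
        rw [Matrix.smul_mul, hTinv]
      rw [hz1, symbol]
      rw [Matrix.mul_smul, Matrix.mul_one, Matrix.smul_mul]
      simp only [neg_sub, sub_mul, add_mul, Matrix.neg_mul, Matrix.smul_mul]
      simp only [smul_neg, neg_neg, inv_neg, neg_smul]
      abel
    rw [h2, Matrix.det_mul, Matrix.det_neg, Matrix.det_smul, Matrix.det_one,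
      Matrix.det_nonsing_inv]
    simp only [Fintype.card_fin, Ring.inverse_eq_inv']
    have hpow : (-z) ^ L * (-1 : ℂ) ^ L = z ^ L := by rw [← mul_pow]; simp
    linear_combination ((symbol R V T z - E • 1).det * T.det⁻¹) * hpow
  refine ⟨key, ?_⟩
  rw [spectrum.mem_iff]
  have halg : (algebraMap ℂ (Matrix (Fin L ⊕ Fin L) (Fin L ⊕ Fin L) ℂ)) z = z • 1 := by
    simp [Algebra.algebraMap_eq_smul_one]
  rw [halg, Matrix.isUnit_iff_isUnit_det, isUnit_iff_ne_zero, not_not]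
  have hdet : (z • 1 - transferMatrix R V T E).det
      = (transferMatrix R V T E - z • 1).det := by
    rw [← neg_sub, Matrix.det_neg, Fintype.card_sum, Fintype.card_fin, ← two_mul, pow_mul]
    simp
  rw [hdet, key]
  have h1 : (z : ℂ) ^ L ≠ 0 := pow_ne_zero _ hz
  have h2 : (T.det)⁻¹ ≠ 0 := inv_ne_zero (isUnit_iff_ne_zero.mp hT)
  simp [mul_eq_zero, h1, h2]
end
end

section
/- Define 𝒯^E = ((E·1 − V)T⁻¹, −R; T⁻¹, 0) and the adjoint transfer matrix 𝒯̂^E = ((E·1 − V*)(R*)⁻¹, −T*; (R*)⁻¹, 0), and let ℐ be the 2L×2L matrix (0, −1; 1, 0). Then (𝒯̂^{conj(E)})* · ℐ · 𝒯^E = ℐ for every E ∈ ℂ. -/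
open Matrix

noncomputable section

/-- The adjoint transfer matrix `𝒯̂^E = ((E·1 − V*)(R*)⁻¹, −T*; (R*)⁻¹, 0)`. -/
def adjTransferMatrix {L : ℕ} (R V T : Matrix (Fin L) (Fin L) ℂ) (E : ℂ) :
    Matrix (Fin L ⊕ Fin L) (Fin L ⊕ Fin L) ℂ :=
  Matrix.fromBlocks ((E • (1 : Matrix (Fin L) (Fin L) ℂ) - Vᴴ) * (Rᴴ)⁻¹) (-Tᴴ) ((Rᴴ)⁻¹) 0

/-- The symplectic-type form `ℐ = (0, −1; 1, 0)`. -/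
def calI (L : ℕ) : Matrix (Fin L ⊕ Fin L) (Fin L ⊕ Fin L) ℂ :=
  Matrix.fromBlocks 0 (-1) 1 0

theorem adjTransfer_I_transfer (L : ℕ) (hL : 1 ≤ L) (R V T : Matrix (Fin L) (Fin L) ℂ)
    (hR : IsUnit R.det) (hT : IsUnit T.det) (E : ℂ) :
    (adjTransferMatrix R V T (starRingEnd ℂ E))ᴴ * calI L * transferMatrix R V T E
      = calI L := by
  have hRc : (Rᴴ)⁻¹ᴴ = R⁻¹ := by
    rw [← Matrix.conjTranspose_nonsing_inv, conjTranspose_conjTranspose]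
  have h1 : ((starRingEnd ℂ E • (1 : Matrix (Fin L) (Fin L) ℂ) - Vᴴ) * (Rᴴ)⁻¹)ᴴ
      = R⁻¹ * (E • (1 : Matrix (Fin L) (Fin L) ℂ) - V) := by
    rw [conjTranspose_mul, hRc, conjTranspose_sub, conjTranspose_smul,
      conjTranspose_one, conjTranspose_conjTranspose]
    simp
  simp only [transferMatrix, adjTransferMatrix, calI, fromBlocks_conjTranspose,
    fromBlocks_multiply, h1, hRc, conjTranspose_neg, conjTranspose_conjTranspose,
    conjTranspose_zero, Matrix.mul_zero, Matrix.zero_mul, Matrix.mul_one,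
    Matrix.one_mul, Matrix.mul_neg, Matrix.neg_mul, neg_neg, add_zero, zero_add,
    Matrix.mul_assoc, Matrix.nonsing_inv_mul R hR, Matrix.nonsing_inv_mul T hT,
    Matrix.mul_nonsing_inv T hT, neg_zero]
  abel
end
end

section
/- Let 𝒯^E be the transfer matrix of H and 𝒯̃^E that of the associated symbol H̃(z) = H(z⁻¹). Then det(𝒯^E − z·1) = det((𝒯̃^E)⁻¹ − z·1) for all z ∈ ℂ, i.e., the characteristic polynomials of 𝒯^E and (𝒯̃^E)⁻¹ coincide. -/
open Matrix

noncomputable section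

/-- The transfer matrix of the associated symbol `H̃(z) = H(z⁻¹)`,
namely `𝒯̃^E = ((E·1 − V)R⁻¹, −T; R⁻¹, 0)`. -/
def coTransferMatrix {L : ℕ} (R V T : Matrix (Fin L) (Fin L) ℂ) (E : ℂ) :
    Matrix (Fin L ⊕ Fin L) (Fin L ⊕ Fin L) ℂ :=
  Matrix.fromBlocks ((E • (1 : Matrix (Fin L) (Fin L) ℂ) - V) * R⁻¹) (-T) R⁻¹ 0

/-- Evaluation of the characteristic polynomial. -/
lemma eval_charpoly_eq {n : Type*} [DecidableEq n] [Fintype n] (M : Matrix n n ℂ) (z : ℂ) :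
    (M.charpoly).eval z = (z • (1 : Matrix n n ℂ) - M).det := by
  rw [Matrix.charpoly, ← Polynomial.coe_evalRingHom, RingHom.map_det]
  congr 1
  ext i j
  by_cases h : i = j <;>
    simp [h, Matrix.charmatrix_apply, Matrix.one_apply, Matrix.diagonal_apply]

/-- Schur-complement formula for the determinant of a block matrix with invertible
scalar lower-right block. -/
lemma det_blocks_aux {L : ℕ} (z : ℂ) (hz : z ≠ 0) (P Q S : Matrix (Fin L) (Fin L) ℂ) :
    (Matrix.fromBlocks P Q S (-(z • (1 : Matrix (Fin L) (Fin L) ℂ)))).det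
      = (-z) ^ L * (P + z⁻¹ • (Q * S)).det := by
  have h1 : (-(z • (1 : Matrix (Fin L) (Fin L) ℂ))) * (-(z⁻¹ • 1)) = 1 := by
    rw [neg_mul_neg, Matrix.smul_mul, Matrix.mul_smul, one_mul, smul_smul,
      mul_inv_cancel₀ hz, one_smul]
  have h2 : (-(z⁻¹ • (1 : Matrix (Fin L) (Fin L) ℂ))) * (-(z • 1)) = 1 := by
    rw [neg_mul_neg, Matrix.smul_mul, Matrix.mul_smul, one_mul, smul_smul,
      inv_mul_cancel₀ hz, one_smul]
  letI : Invertible (-(z • (1 : Matrix (Fin L) (Fin L) ℂ))) := ⟨-(z⁻¹ • 1), h2, h1⟩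
  rw [Matrix.det_fromBlocks₂₂]
  have hinv : ⅟(-(z • (1 : Matrix (Fin L) (Fin L) ℂ))) = -(z⁻¹ • 1) := rfl
  rw [hinv]
  congr 1
  · rw [show -(z • (1 : Matrix (Fin L) (Fin L) ℂ)) = (-z) • 1 by rw [neg_smul],
      Matrix.det_smul, Matrix.det_one, mul_one, Fintype.card_fin]
  · congr 1
    rw [Matrix.mul_neg, Matrix.mul_smul, Matrix.mul_one, Matrix.neg_mul, Matrix.smul_mul,
      sub_neg_eq_add]

/-- Schur-complement formula with invertible scalar upper-left block. -/
lemma det_blocks_aux' {L : ℕ} (z : ℂ) (hz : z ≠ 0) (Q S D : Matrix (Fin L) (Fin L) ℂ) :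
    (Matrix.fromBlocks (-(z • (1 : Matrix (Fin L) (Fin L) ℂ))) Q S D).det
      = (-z) ^ L * (D + z⁻¹ • (S * Q)).det := by
  have h1 : (-(z • (1 : Matrix (Fin L) (Fin L) ℂ))) * (-(z⁻¹ • 1)) = 1 := by
    rw [neg_mul_neg, Matrix.smul_mul, Matrix.mul_smul, one_mul, smul_smul,
      mul_inv_cancel₀ hz, one_smul]
  have h2 : (-(z⁻¹ • (1 : Matrix (Fin L) (Fin L) ℂ))) * (-(z • 1)) = 1 := by
    rw [neg_mul_neg, Matrix.smul_mul, Matrix.mul_smul, one_mul, smul_smul,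
      inv_mul_cancel₀ hz, one_smul]
  letI : Invertible (-(z • (1 : Matrix (Fin L) (Fin L) ℂ))) := ⟨-(z⁻¹ • 1), h2, h1⟩
  rw [Matrix.det_fromBlocks₁₁]
  have hinv : ⅟(-(z • (1 : Matrix (Fin L) (Fin L) ℂ))) = -(z⁻¹ • 1) := rfl
  rw [hinv]
  congr 1
  · rw [show -(z • (1 : Matrix (Fin L) (Fin L) ℂ)) = (-z) • 1 by rw [neg_smul],
      Matrix.det_smul, Matrix.det_one, mul_one, Fintype.card_fin]
  · congr 1
    rw [Matrix.mul_neg, Matrix.mul_smul, Matrix.mul_one, Matrix.neg_mul, sub_neg_eq_add,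
      Matrix.smul_mul]

theorem charpoly_transfer_eq_charpoly_inv_coTransfer (L : ℕ) (hL : 1 ≤ L)
    (R V T : Matrix (Fin L) (Fin L) ℂ)
    (hR : IsUnit R.det) (hT : IsUnit T.det) (E : ℂ) :
    (∀ z : ℂ,
        (transferMatrix R V T E - z • 1).det
          = ((coTransferMatrix R V T E)⁻¹ - z • 1).det) ∧
      (transferMatrix R V T E).charpoly = ((coTransferMatrix R V T E)⁻¹).charpoly := by
  set A : Matrix (Fin L) (Fin L) ℂ := E • (1 : Matrix (Fin L) (Fin L) ℂ) - V with hA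
  clear_value A
  -- the inverse of the co-transfer matrix
  have hMinv : (coTransferMatrix R V T E)⁻¹
      = Matrix.fromBlocks 0 R (-T⁻¹) (T⁻¹ * A) := by
    apply Matrix.inv_eq_right_inv
    rw [coTransferMatrix, Matrix.fromBlocks_multiply, ← hA]
    have e11 : A * R⁻¹ * 0 + (-T) * (-T⁻¹) = 1 := by
      rw [Matrix.mul_zero, Matrix.neg_mul, Matrix.mul_neg, neg_neg, zero_add,
        Matrix.mul_nonsing_inv _ hT]
    have e12 : A * R⁻¹ * R + (-T) * (T⁻¹ * A) = 0 := by
      rw [Matrix.mul_assoc A, Matrix.nonsing_inv_mul _ hR, Matrix.mul_one,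
        Matrix.neg_mul, ← Matrix.mul_assoc, Matrix.mul_nonsing_inv _ hT, Matrix.one_mul,
        add_neg_cancel]
    have e21 : R⁻¹ * 0 + (0 : Matrix (Fin L) (Fin L) ℂ) * (-T⁻¹) = 0 := by
      rw [Matrix.mul_zero, Matrix.zero_mul, add_zero]
    have e22 : R⁻¹ * R + (0 : Matrix (Fin L) (Fin L) ℂ) * (T⁻¹ * A) = 1 := by
      rw [Matrix.nonsing_inv_mul _ hR, Matrix.zero_mul, add_zero]
    rw [e11, e12, e21, e22, Matrix.fromBlocks_one]
  -- key determinant identity for z ≠ 0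
  have key : ∀ z : ℂ, z ≠ 0 →
      (transferMatrix R V T E - z • 1).det
        = ((coTransferMatrix R V T E)⁻¹ - z • 1).det := by
    intro z hz
    have hone : (z • (1 : Matrix (Fin L ⊕ Fin L) (Fin L ⊕ Fin L) ℂ))
        = Matrix.fromBlocks (z • 1) 0 0 (z • 1) := by
      rw [← Matrix.fromBlocks_one, Matrix.fromBlocks_smul, smul_zero]
    have hTM : transferMatrix R V T E - z • 1
        = Matrix.fromBlocks (A * T⁻¹ - z • 1) (-R) T⁻¹ (-(z • 1)) := by
      rw [transferMatrix, hone, ← hA]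
      ext (i | i) (j | j) <;>
        simp [Matrix.fromBlocks, Matrix.sub_apply]
    have hNM : (coTransferMatrix R V T E)⁻¹ - z • 1
        = Matrix.fromBlocks (-(z • 1)) R (-T⁻¹) (T⁻¹ * A - z • 1) := by
      rw [hMinv, hone]
      ext (i | i) (j | j) <;>
        simp [Matrix.fromBlocks, Matrix.sub_apply]
    rw [hTM, hNM, det_blocks_aux z hz, det_blocks_aux' z hz]
    congr 1
    have hL1 : A * T⁻¹ - z • 1 + z⁻¹ • (-R * T⁻¹)
        = (A - z • T - z⁻¹ • R) * T⁻¹ := by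
      rw [Matrix.sub_mul, Matrix.sub_mul, Matrix.smul_mul, Matrix.smul_mul,
        Matrix.mul_nonsing_inv _ hT, Matrix.neg_mul, smul_neg, sub_eq_add_neg (A * T⁻¹ - z • 1)]
    have hL2 : T⁻¹ * A - z • 1 + z⁻¹ • (-T⁻¹ * R)
        = T⁻¹ * (A - z • T - z⁻¹ • R) := by
      rw [Matrix.mul_sub, Matrix.mul_sub, Matrix.mul_smul, Matrix.mul_smul,
        Matrix.nonsing_inv_mul _ hT, Matrix.neg_mul, smul_neg, sub_eq_add_neg (T⁻¹ * A - z • 1)]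
    rw [hL1, hL2, Matrix.det_mul, Matrix.det_mul, mul_comm]
  -- determinant as evaluation of charpoly
  have hdet : ∀ (M : Matrix (Fin L ⊕ Fin L) (Fin L ⊕ Fin L) ℂ) (z : ℂ),
      (M - z • 1).det = (M.charpoly).eval z := by
    intro M z
    rw [eval_charpoly_eq, show z • (1 : Matrix (Fin L ⊕ Fin L) (Fin L ⊕ Fin L) ℂ) - M
      = -(M - z • 1) from (neg_sub _ _).symm, Matrix.det_neg]
    have : Fintype.card (Fin L ⊕ Fin L) = 2 * L := by
      simp [Fintype.card_sum, two_mul]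
    rw [this, pow_mul, neg_one_sq, one_pow, one_mul]
  -- the charpoly equality
  have hchar : (transferMatrix R V T E).charpoly
      = ((coTransferMatrix R V T E)⁻¹).charpoly := by
    apply Polynomial.eq_of_infinite_eval_eq
    apply Set.Infinite.mono _ ((Set.finite_singleton (0 : ℂ)).infinite_compl)
    intro z hz
    have hz0 : z ≠ 0 := hz
    have := key z hz0
    rw [hdet _ z, hdet _ z] at this
    exact this
  refine ⟨fun z => ?_, hchar⟩
  rw [hdet _ z, hdet _ z, hchar]
end
end

section
/- Let H(z) = R z⁻¹ + V + T z with R, T invertible and z ∈ ℂ \ {0} not an eigenvalue of 𝒯^E (equivalently H(z) − E·1 invertible). Then the resolvent of the transfer matrix is given by the block formula (𝒯^E − z·1)⁻¹ = diag(T, 1) · ((E − H(z))⁻¹, −z⁻¹(E − H(z))⁻¹; z⁻¹(E − H(z))⁻¹, −z⁻¹R⁻¹ − z⁻²(E − H(z))⁻¹) · diag(1, R), where (E − H(z))⁻¹ abbreviates (E·1 − H(z))⁻¹. -/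
open Matrix

noncomputable section

theorem transfer_resolvent_formula (L : ℕ) (hL : 1 ≤ L)
    (R V T : Matrix (Fin L) (Fin L) ℂ)
    (hR : IsUnit R.det) (hT : IsUnit T.det) (E : ℂ) (z : ℂ) (hz : z ≠ 0)
    (hres : IsUnit (E • (1 : Matrix (Fin L) (Fin L) ℂ) - symbol R V T z).det) :
    (transferMatrix R V T E - z • 1)⁻¹
      = Matrix.fromBlocks T 0 0 (1 : Matrix (Fin L) (Fin L) ℂ)
          * Matrix.fromBlocks
              ((E • (1 : Matrix (Fin L) (Fin L) ℂ) - symbol R V T z)⁻¹)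
              (-(z⁻¹ • (E • (1 : Matrix (Fin L) (Fin L) ℂ) - symbol R V T z)⁻¹))
              (z⁻¹ • (E • (1 : Matrix (Fin L) (Fin L) ℂ) - symbol R V T z)⁻¹)
              (-(z⁻¹ • R⁻¹)
                - (z ^ 2)⁻¹ • (E • (1 : Matrix (Fin L) (Fin L) ℂ) - symbol R V T z)⁻¹)
          * Matrix.fromBlocks (1 : Matrix (Fin L) (Fin L) ℂ) 0 0 R := by

  have hTi : T⁻¹ * T = 1 := Matrix.nonsing_inv_mul T hT
  have hTT : T * T⁻¹ = 1 := Matrix.mul_nonsing_inv T hT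
  have hRi : R * R⁻¹ = 1 := Matrix.mul_nonsing_inv R hR
  have hRi' : R⁻¹ * R = 1 := Matrix.nonsing_inv_mul R hR
  set S := (E • (1 : Matrix (Fin L) (Fin L) ℂ) - symbol R V T z)⁻¹ with hS
  set M := E • (1 : Matrix (Fin L) (Fin L) ℂ) - symbol R V T z with hM
  have hMS : M * S = 1 := Matrix.mul_nonsing_inv M hres
  have hSM : S * M = 1 := Matrix.nonsing_inv_mul M hres
  have hA : (E • (1 : Matrix (Fin L) (Fin L) ℂ) - V) = M + z⁻¹ • R + z • T := by
    rw [hM, symbol]; abel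
  have hTc : ∀ X : Matrix (Fin L) (Fin L) ℂ, T⁻¹ * (T * X) = X := fun X => by
    rw [← Matrix.mul_assoc, hTi, Matrix.one_mul]
  have hMc : ∀ X : Matrix (Fin L) (Fin L) ℂ, M * (S * X) = X := fun X => by
    rw [← Matrix.mul_assoc, hMS, Matrix.one_mul]
  have hRc : ∀ X : Matrix (Fin L) (Fin L) ℂ, R * (R⁻¹ * X) = X := fun X => by
    rw [← Matrix.mul_assoc, hRi, Matrix.one_mul]
  have hz1 : z * z⁻¹ = 1 := mul_inv_cancel₀ hz
  have hz1' : z⁻¹ * z = 1 := inv_mul_cancel₀ hz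
  have hz2 : z * (z ^ 2)⁻¹ = z⁻¹ := by field_simp
  have hz3 : z⁻¹ * z⁻¹ = (z ^ 2)⁻¹ := by field_simp
  have hz4 : (z ^ 2)⁻¹ * z = z⁻¹ := by field_simp
  apply Matrix.inv_eq_right_inv
  rw [transferMatrix, show (z • (1 : Matrix (Fin L ⊕ Fin L) (Fin L ⊕ Fin L) ℂ))
      = Matrix.fromBlocks (z • 1) 0 0 (z • 1) by
    rw [← Matrix.fromBlocks_one, Matrix.fromBlocks_smul, smul_zero]]
  rw [sub_eq_add_neg, Matrix.fromBlocks_neg, Matrix.fromBlocks_add,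
    ← Matrix.fromBlocks_one]
  simp only [Matrix.fromBlocks_multiply, hA, Matrix.add_mul, Matrix.mul_add,
    Matrix.sub_mul, Matrix.mul_sub, Matrix.neg_mul, Matrix.mul_neg,
    Matrix.smul_mul, Matrix.mul_smul, Matrix.mul_assoc, hTc, hMc, hRc,
    hTi, hTT, hRi, hRi', hMS, hSM, Matrix.mul_one, Matrix.one_mul,
    Matrix.mul_zero, Matrix.zero_mul, smul_zero, add_zero, zero_add, neg_zero,
    smul_smul, hz1, hz1', hz2, hz3, hz4, one_smul, smul_neg, neg_neg]
  rw [Matrix.fromBlocks_inj]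
  refine ⟨by module, by module, by module, by module⟩
end
end

section
/- Let A : ℂ^M → ℂ^L, C : ℂ^L → ℂ^M be linear maps and B : ℂ^M → ℂ^M diagonalizable with spectral decomposition B = Σ_{i=1}^M b_i P_i, where the P_i are rank-one idempotents with P_i P_j = 0 for i ≠ j and Σ P_i = 1. Then det_L(A B C) = Σ_{I ⊆ {1,…,M}, |I| = L} (∏_{i∈I} b_i) · det_L(Σ_{i∈I} A P_i C). -/
/-!
Each `A * P i * C` has rank at most one, so it is an outer product `vecMulVec (u i) (v i)`.
Expanding `det (∑ i, b i • vecMulVec (u i) (v i))` multilinearly in the rows gives a sum over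
maps `r : Fin L → Fin M`; the terms with `r` not injective vanish (two equal rows), and grouping
the injective ones by their image `I` reproduces the same expansion of
`det (∑ i ∈ I, vecMulVec (u i) (v i))`, weighted by `∏ i ∈ I, b i`.
-/

open Matrix Finset

noncomputable section

theorem Matrix.exists_eq_vecMulVec_of_rank_le_one {K m n : Type*} [Field K] [Finite m]
    [Fintype n] {N : Matrix m n K} (h : N.rank ≤ 1) :
    ∃ (w : m → K) (v : n → K), N = vecMulVec w v := by
  rw [rank_eq_finrank_span_cols] at h
  obtain ⟨w, hw⟩ := finrank_le_one_iff.mp h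
  choose c hc using fun l => hw ⟨Nᵀ l, Submodule.subset_span ⟨l, rfl⟩⟩
  refine ⟨w, c, ?_⟩
  ext k l
  have := congrFun (congrArg Subtype.val (hc l)) k
  simp only [Submodule.coe_smul, Pi.smul_apply, smul_eq_mul, transpose_apply] at this
  rw [vecMulVec_apply, ← this, mul_comm]

theorem Matrix.det_sum_vecMulVec {R n ι : Type*} [CommRing R] [Fintype n] [DecidableEq n]
    [DecidableEq ι] (S : Finset ι) (u v : ι → n → R) :
    det (∑ i ∈ S, vecMulVec (u i) (v i))
      = ∑ r ∈ Fintype.piFinset fun _ : n => S,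
          (∏ k, u (r k) k) * det (of fun k => v (r k)) := by
  have hrows : ∑ i ∈ S, vecMulVec (u i) (v i) = of fun k => ∑ i ∈ S, u i k • v i := by
    ext k l
    simp [Matrix.sum_apply, vecMulVec_apply]
  rw [hrows]
  change detRowAlternating (fun k => ∑ i ∈ S, u i k • v i) = _
  rw [← AlternatingMap.coe_multilinearMap, MultilinearMap.map_sum_finset]
  simp_rw [MultilinearMap.map_smul_univ, smul_eq_mul]
  rfl

theorem Function.Injective.image_univ_eq {n ι : Type*} [Fintype n] [DecidableEq ι]
    {r : n → ι} (hr : Function.Injective r) {I : Finset ι} (hrI : ∀ k, r k ∈ I)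
    (hI : #I = Fintype.card n) : univ.image r = I :=
  eq_of_subset_of_card_le (image_subset_iff.mpr fun k _ => hrI k)
    (by rw [card_image_of_injective _ hr, card_univ, hI])

theorem Finset.sum_piFinset_eq_sum_powersetCard {n ι β : Type*} [Fintype n] [DecidableEq n]
    [DecidableEq ι] [AddCommMonoid β] (S : Finset ι) {g : (n → ι) → β}
    (hg : ∀ r, ¬ Function.Injective r → g r = 0) :
    ∑ r ∈ Fintype.piFinset (fun _ : n => S), g r
      = ∑ I ∈ S.powersetCard (Fintype.card n),
          ∑ r ∈ Fintype.piFinset (fun _ : n => I), g r := by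
  classical
  have hinj (T : Finset ι) : ∑ r ∈ Fintype.piFinset (fun _ : n => T), g r
      = ∑ r ∈ Fintype.piFinset (fun _ : n => T) with Function.Injective r, g r :=
    (sum_filter_of_ne fun r _ hr => not_not.mp (mt (hg r) hr)).symm
  rw [hinj, ← sum_fiberwise_of_maps_to (g := fun r => univ.image r)
    (t := S.powersetCard (Fintype.card n))]
  · refine sum_congr rfl fun I hI => ?_
    rw [mem_powersetCard] at hI
    rw [hinj, filter_filter]
    congr 1
    ext r
    simp only [mem_filter, Fintype.mem_piFinset]
    constructor
    · rintro ⟨-, hr, rfl⟩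
      exact ⟨fun k => mem_image_of_mem r (mem_univ k), hr⟩
    · rintro ⟨hrI, hr⟩
      exact ⟨fun k => hI.1 (hrI k), hr, hr.image_univ_eq hrI hI.2⟩
  · intro r hr
    simp only [mem_filter, Fintype.mem_piFinset] at hr
    rw [mem_powersetCard, card_image_of_injective _ hr.2, card_univ]
    exact ⟨image_subset_iff.mpr fun k _ => hr.1 k, rfl⟩

theorem Matrix.det_sum_smul_vecMulVec {R n ι : Type*} [CommRing R] [Fintype n] [DecidableEq n]
    [DecidableEq ι] (S : Finset ι) (x : ι → R) (u v : ι → n → R) :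
    det (∑ i ∈ S, x i • vecMulVec (u i) (v i))
      = ∑ I ∈ S.powersetCard (Fintype.card n),
          (∏ i ∈ I, x i) * det (∑ i ∈ I, vecMulVec (u i) (v i)) := by
  have hdet_zero (r : n → ι) (hr : ¬ Function.Injective r) : det (of fun k => v (r k)) = 0 := by
    obtain ⟨k, l, hkl, hne⟩ := Function.not_injective_iff.mp hr
    exact det_zero_of_row_eq hne (congrArg v hkl)
  simp_rw [← smul_vecMulVec, det_sum_vecMulVec]
  rw [sum_piFinset_eq_sum_powersetCard _ fun r hr => by rw [hdet_zero r hr, mul_zero]]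
  refine sum_congr rfl fun I hI => ?_
  rw [mul_sum]
  refine sum_congr rfl fun r hr => ?_
  by_cases hinj : Function.Injective r
  · have himage := hinj.image_univ_eq (Fintype.mem_piFinset.mp hr) (mem_powersetCard.mp hI).2
    simp only [Pi.smul_apply, smul_eq_mul, prod_mul_distrib]
    rw [← himage, prod_image fun _ _ _ _ h => hinj h, mul_assoc]
  · rw [hdet_zero r hinj, mul_zero, mul_zero, mul_zero]

theorem Matrix.det_sum_smul_of_rank_le_one {K n ι : Type*} [Field K] [Fintype n] [DecidableEq n]
    [DecidableEq ι] (S : Finset ι) (x : ι → K) {N : ι → Matrix n n K}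
    (hN : ∀ i, (N i).rank ≤ 1) :
    det (∑ i ∈ S, x i • N i)
      = ∑ I ∈ S.powersetCard (Fintype.card n), (∏ i ∈ I, x i) * det (∑ i ∈ I, N i) := by
  choose u v huv using fun i => exists_eq_vecMulVec_of_rank_le_one (hN i)
  simp_rw [huv]
  exact det_sum_smul_vecMulVec S x u v

theorem det_mul_diagonalizable_mul_general (L M : ℕ)
    (A : Matrix (Fin L) (Fin M) ℂ) (C : Matrix (Fin M) (Fin L) ℂ)
    (B : Matrix (Fin M) (Fin M) ℂ) (b : Fin M → ℂ)
    (P : Fin M → Matrix (Fin M) (Fin M) ℂ)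
    (hB : B = ∑ i, b i • P i)
    (hrank : ∀ i, (P i).rank = 1) :
    (A * B * C).det
      = ∑ I ∈ Finset.powersetCard L (Finset.univ : Finset (Fin M)),
          (∏ i ∈ I, b i) * (A * (∑ i ∈ I, P i) * C).det := by
  have hrank_APC (i : Fin M) : (A * P i * C).rank ≤ 1 :=
    (rank_mul_le_left _ _).trans ((rank_mul_le_right _ _).trans (hrank i).le)
  calc (A * B * C).det = det (∑ i, b i • (A * P i * C)) := by
        simp_rw [hB, Matrix.mul_sum, Matrix.sum_mul, Matrix.mul_smul, Matrix.smul_mul]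
    _ = _ := by
        rw [det_sum_smul_of_rank_le_one _ b hrank_APC, Fintype.card_fin]
        simp_rw [Matrix.mul_sum, Matrix.sum_mul]

theorem det_mul_diagonalizable_mul (L M : ℕ) (hL : 1 ≤ L) (hLM : L ≤ M)
    (A : Matrix (Fin L) (Fin M) ℂ) (C : Matrix (Fin M) (Fin L) ℂ)
    (B : Matrix (Fin M) (Fin M) ℂ) (b : Fin M → ℂ)
    (P : Fin M → Matrix (Fin M) (Fin M) ℂ)
    (hB : B = ∑ i, b i • P i)
    (hidem : ∀ i, P i * P i = P i)
    (hrank : ∀ i, (P i).rank = 1)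
    (horth : ∀ i j, i ≠ j → P i * P j = 0)
    (hsum : ∑ i, P i = 1) :
    (A * B * C).det
      = ∑ I ∈ Finset.powersetCard L (Finset.univ : Finset (Fin M)),
          (∏ i ∈ I, b i) * (A * (∑ i ∈ I, P i) * C).det :=
  det_mul_diagonalizable_mul_general L M A C B b P hB hrank
end
end

section
/- Suppose E is an eigenvalue of the finite block tridiagonal matrix H_N (the N×N block Toeplitz matrix with subdiagonal blocks R, diagonal blocks V, superdiagonal blocks T, with R and T invertible) with some multiplicity. Then det(H_N − E·1) = (−1)^{NL} det(T)^N · det_L( π₁* (𝒯^E)^N π₁ ), where π₁ : ℂ^L → ℂ^{2L} is the inclusion onto the first L coordinates and 𝒯^E = ((E·1 − V)T⁻¹, −R; T⁻¹, 0); this identity holds as an equality of polynomials in E. -/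
open Matrix

noncomputable section

/-- The finite block tridiagonal Toeplitz matrix `H_N` with diagonal blocks `V`,
superdiagonal blocks `T` and subdiagonal blocks `R`. -/
def blockTridiag (L N : ℕ) (R V T : Matrix (Fin L) (Fin L) ℂ) :
    Matrix (Fin N × Fin L) (Fin N × Fin L) ℂ :=
  fun p q =>
    if p.1 = q.1 then V p.2 q.2
    else if (p.1 : ℕ) + 1 = (q.1 : ℕ) then T p.2 q.2
    else if (q.1 : ℕ) + 1 = (p.1 : ℕ) then R p.2 q.2
    else 0

/-!
Let `A = V - E • 1` and let `ψ` be the block sequence with `ψ 0 = 0`, `ψ 1 = T⁻¹` and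
`T ψ (n + 2) + A ψ (n + 1) + R ψ n = 0`; the first block column of `𝒯^E ^ n` is
`(T ψ (n + 1), ψ n)`. Multiplying `H_N - E` on the right by the block lower triangular Toeplitz
matrix `S = (ψ (i + 1 - j))`, of determinant `det T⁻¹ ^ N`, the recurrence kills every block
except the identity blocks on the superdiagonal and the last block row `-T ψ (N + 1 - j)`.
A cyclic shift of the block columns makes this block companion matrix block lower triangular,
so its determinant is `(-1) ^ ((N - 1) L) det (-T ψ (N + 1))`.
-/

namespace Matrix

variable {α ι R : Type*} [CommRing R] [Fintype ι] [DecidableEq ι]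

theorem det_comp_of_isLowerTriangular [LinearOrder α] [Fintype α]
    {B : Matrix α α (Matrix ι ι R)} (hB : B.IsLowerTriangular) :
    (comp α α ι ι R B).det = ∏ a, (B a a).det := by
  rw [hB.comp.det_fintype]
  refine Fintype.prod_equiv OrderDual.toDual.symm _ _ fun a => ?_
  let e : ι ≃ {p : α × ι // OrderDual.toDual p.1 = a} :=
    { toFun := fun i => ⟨(OrderDual.ofDual a, i), rfl⟩
      invFun := fun p => p.1.2
      left_inv := fun _ => rfl
      right_inv := fun ⟨⟨_, _⟩, h⟩ => by subst h; rfl }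
  rw [← det_submatrix_equiv_self e]
  rfl

theorem det_comp_of_castSucc_eq_single {n : ℕ}
    (B : Matrix (Fin (n + 1)) (Fin (n + 1)) (Matrix ι ι R))
    (hB : ∀ i : Fin n, B i.castSucc = Pi.single i.succ 1) :
    (comp _ _ ι ι R B).det = (-1) ^ (n * Fintype.card ι) * (B (Fin.last n) 0).det := by
  have rotate_castSucc (j : Fin n) : finRotate (n + 1) j.castSucc = j.succ :=
    finRotate_of_lt j.isLt
  set B' := B.submatrix id (finRotate (n + 1))
  have hB' : B'.IsLowerTriangular := by
    intro i j hij
    change i < j at hij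
    induction i using Fin.lastCases with
    | last => exact absurd hij (Fin.le_last j).not_gt
    | cast i =>
      induction j using Fin.lastCases with
      | last => simp [B', hB, (Fin.succ_ne_zero i).symm]
      | cast j =>
        simp [B', hB, rotate_castSucc, (Fin.castSucc_lt_castSucc_iff.mp hij).ne']
  have hdet : (comp _ _ ι ι R B').det = (B (Fin.last n) 0).det := by
    rw [det_comp_of_isLowerTriangular hB', Fin.prod_univ_castSucc]
    simp [B', hB, rotate_castSucc]
  set σ : Equiv.Perm (Fin (n + 1) × ι) := Equiv.prodCongrLeft fun _ => finRotate (n + 1)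
  have hsign : ((Equiv.Perm.sign σ : ℤ) : R) = (-1) ^ (n * Fintype.card ι) := by
    simp [σ, Equiv.Perm.sign_prodCongrLeft, sign_finRotate, pow_mul]
  have hperm :
      (comp _ _ ι ι R B').det = (-1) ^ (n * Fintype.card ι) * (comp _ _ ι ι R B).det := by
    rw [← hsign, ← det_permute' σ]; rfl
  rw [← hdet, hperm, ← mul_assoc, ← pow_add, Even.neg_one_pow ⟨_, rfl⟩, one_mul]

def tridiag {S : Type*} [Zero S] (N : ℕ) (r v t : S) : Matrix (Fin N) (Fin N) S :=
  of fun i j =>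
    if i = j then v else if (i : ℕ) + 1 = j then t else if (j : ℕ) + 1 = i then r else 0

theorem sum_tridiag_mul {S : Type*} [Semiring S] {N : ℕ} (r v t : S) (f : ℕ → S)
    (hf : f 0 = 0) (i : Fin N) :
    ∑ k, tridiag N r v t i k * f (k + 1)
      = v * f (i + 1) + r * f i + if (i : ℕ) + 1 < N then t * f (i + 2) else 0 := by
  let g (k : ℕ) : S := (if (i : ℕ) = k then v * f (k + 1) else 0)
    + (if (i : ℕ) + 1 = k then t * f (k + 1) else 0) + (if k + 1 = i then r * f (k + 1) else 0)
  have hsummand (k : Fin N) : tridiag N r v t i k * f (k + 1) = g k := by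
    simp only [g, tridiag, of_apply, Fin.ext_iff]
    split_ifs <;> first | omega | simp
  rw [Finset.sum_congr rfl fun k _ => hsummand k, Fin.sum_univ_eq_sum_range g]
  simp only [g, Finset.sum_add_distrib, Finset.sum_ite_eq, Finset.mem_range, i.isLt, if_true]
  obtain ⟨_ | i, hi⟩ := i
  · simp [hf, add_comm]
  · simp only [add_left_inj, Finset.sum_ite_eq', Finset.mem_range, show i < N by omega, if_true]
    abel

end Matrix

section Transfer

variable {L : ℕ} (R A T : Matrix (Fin L) (Fin L) ℂ)

def transferSeq : ℕ → Matrix (Fin L) (Fin L) ℂ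
  | 0 => 0
  | 1 => T⁻¹
  | n + 2 => -T⁻¹ * (A * transferSeq (n + 1) + R * transferSeq n)

variable {R A T}

@[simp]
theorem transferSeq_zero : transferSeq R A T 0 = 0 := rfl

theorem mul_transferSeq_one (hT : IsUnit T.det) : T * transferSeq R A T 1 = 1 :=
  mul_nonsing_inv T hT

theorem transferSeq_recurrence (hT : IsUnit T.det) (n : ℕ) :
    T * transferSeq R A T (n + 2) + A * transferSeq R A T (n + 1) + R * transferSeq R A T n
      = 0 := by
  rw [transferSeq, Matrix.neg_mul, Matrix.mul_neg, ← Matrix.mul_assoc, mul_nonsing_inv T hT,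
    Matrix.one_mul, add_assoc, neg_add_cancel]

theorem transferSeq_recurrence_tsub (hT : IsUnit T.det) (i j : ℕ) :
    T * transferSeq R A T (i + 2 - j) + A * transferSeq R A T (i + 1 - j)
      + R * transferSeq R A T (i - j) = if j = i + 1 then 1 else 0 := by
  rcases lt_trichotomy j (i + 1) with hj | rfl | hj
  · obtain ⟨m, rfl⟩ := Nat.exists_eq_add_of_le (Nat.le_of_lt_succ hj)
    rw [if_neg hj.ne, show j + m + 2 - j = m + 2 by omega, show j + m + 1 - j = m + 1 by omega,
      Nat.add_sub_cancel_left, transferSeq_recurrence hT]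
  · simp [mul_transferSeq_one hT, show i + 2 - (i + 1) = 1 by omega]
  · simp [hj.ne', show i + 2 - j = 0 by omega, show i + 1 - j = 0 by omega,
      show i - j = 0 by omega]

theorem toBlocks_transferMatrix_pow (hT : IsUnit T.det) (V : Matrix (Fin L) (Fin L) ℂ) (E : ℂ)
    (n : ℕ) :
    toBlocks₁₁ (transferMatrix R V T E ^ n) = T * transferSeq R (V - E • 1) T (n + 1) ∧
      toBlocks₂₁ (transferMatrix R V T E ^ n) = transferSeq R (V - E • 1) T n := by
  induction n with
  | zero => simp [← fromBlocks_one, mul_transferSeq_one hT]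
  | succ n ih =>
    rw [pow_succ', ← fromBlocks_toBlocks (transferMatrix R V T E ^ n), ih.1, ih.2,
      transferMatrix, fromBlocks_multiply, toBlocks_fromBlocks₁₁, toBlocks_fromBlocks₂₁,
      Matrix.mul_assoc _ T⁻¹]
    simp only [← Matrix.mul_assoc T⁻¹ T, nonsing_inv_mul T hT, Matrix.one_mul, Matrix.zero_mul,
      add_zero, and_true]
    have hrec := transferSeq_recurrence (R := R) (A := V - E • 1) hT n
    rw [add_assoc] at hrec
    rw [eq_neg_of_add_eq_zero_left hrec]
    noncomm_ring

end Transfer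

section BlockTridiag

variable {L : ℕ} {R A T : Matrix (Fin L) (Fin L) ℂ}

theorem blockTridiag_sub_smul_one (N : ℕ) (R V T : Matrix (Fin L) (Fin L) ℂ) (E : ℂ) :
    blockTridiag L N R V T - E • 1 = blockTridiag L N R (V - E • 1) T := by
  ext p q
  simp only [blockTridiag, Matrix.sub_apply, Matrix.smul_apply, one_apply, Prod.ext_iff]
  split_ifs <;> simp_all

theorem blockTridiag_eq_comp (N : ℕ) (R V T : Matrix (Fin L) (Fin L) ℂ) :
    blockTridiag L N R V T = comp _ _ _ _ ℂ (tridiag N R V T) := by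
  ext p q
  simp only [blockTridiag, tridiag, comp_apply, of_apply]
  split_ifs <;> rfl

theorem tridiag_mul_transferSeq_apply (hT : IsUnit T.det) {N : ℕ} (i j : Fin N) :
    (tridiag N R A T * of fun k j : Fin N => transferSeq R A T (k + 1 - j)) i j
      = if (i : ℕ) + 1 < N then (if (j : ℕ) = i + 1 then 1 else 0)
        else -(T * transferSeq R A T (i + 2 - j)) := by
  have hrec := transferSeq_recurrence_tsub (R := R) (A := A) hT i j
  rw [add_rotate] at hrec
  simp only [mul_apply, of_apply]
  rw [sum_tridiag_mul R A T (fun m => transferSeq R A T (m - j)) (by simp) i]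
  split_ifs at hrec ⊢
  · exact hrec
  · exact hrec
  · omega
  · rw [add_zero]
    exact eq_neg_of_add_eq_zero_left hrec

theorem det_blockTridiag (hT : IsUnit T.det) (N : ℕ) :
    (blockTridiag L N R A T).det
      = (-1) ^ (N * L) * T.det ^ N * (T * transferSeq R A T (N + 1)).det := by
  obtain _ | n := N
  · simp [mul_transferSeq_one hT]
  set S : Matrix (Fin (n + 1)) (Fin (n + 1)) (Matrix (Fin L) (Fin L) ℂ) :=
    of fun k j => transferSeq R A T (k + 1 - j)
  have hS : (comp _ _ _ _ ℂ S).det = T.det⁻¹ ^ (n + 1) := by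
    rw [det_comp_of_isLowerTriangular]
    · simp [S, transferSeq, det_nonsing_inv]
    · intro i j (hij : i < j)
      simp [S, Nat.sub_eq_zero_of_le (Nat.succ_le_of_lt hij)]
  have hprod : (comp _ _ _ _ ℂ (tridiag (n + 1) R A T * S)).det
      = (-1) ^ (n * L) * (-(T * transferSeq R A T (n + 2))).det := by
    rw [det_comp_of_castSucc_eq_single, Fintype.card_fin]
    · simp [S, tridiag_mul_transferSeq_apply hT]
    · intro i
      ext j
      simp [S, tridiag_mul_transferSeq_apply hT, Pi.single_apply, Fin.ext_iff]
  have hmul : (blockTridiag L (n + 1) R A T).det * (comp _ _ _ _ ℂ S).det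
      = (comp _ _ _ _ ℂ (tridiag (n + 1) R A T * S)).det := by
    rw [← det_mul, blockTridiag_eq_comp, ← compRingEquiv_apply, ← compRingEquiv_apply,
      ← compRingEquiv_apply, map_mul]
  rw [hS, hprod, det_neg, Fintype.card_fin, inv_pow, ← div_eq_mul_inv,
    div_eq_iff (pow_ne_zero _ hT.ne_zero)] at hmul
  rw [hmul]
  ring

end BlockTridiag

theorem det_blockTridiag_eq_det_transfer_pow_general (L N : ℕ)
    (R V T : Matrix (Fin L) (Fin L) ℂ)
    (hT : IsUnit T.det) (E : ℂ) :
    (blockTridiag L N R V T - E • 1).det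
      = (-1 : ℂ) ^ (N * L) * T.det ^ N
          * (Matrix.toBlocks₁₁ ((transferMatrix R V T E) ^ N)).det := by
  rw [blockTridiag_sub_smul_one, det_blockTridiag hT, (toBlocks_transferMatrix_pow hT V E N).1]

theorem det_blockTridiag_eq_det_transfer_pow (L N : ℕ) (hL : 1 ≤ L) (hN : 1 ≤ N)
    (R V T : Matrix (Fin L) (Fin L) ℂ)
    (hR : IsUnit R.det) (hT : IsUnit T.det) (E : ℂ) :
    (blockTridiag L N R V T - E • 1).det
      = (-1 : ℂ) ^ (N * L) * T.det ^ N
          * (Matrix.toBlocks₁₁ ((transferMatrix R V T E) ^ N)).det :=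
  det_blockTridiag_eq_det_transfer_pow_general L N R V T hT E
end
end

section
/- Suppose K H(z) K = −H(z) (chiral symmetry) with K = diag(1_{L/2}, −1_{L/2}), L even, R, T invertible. Then at zero energy the transfer matrix commutes with K⊗σ₃, i.e., (K⊗σ₃) 𝒯⁰ (K⊗σ₃) = 𝒯⁰, and 𝒯⁰ decomposes (after a permutation of coordinates regrouping the blocks) as a direct sum 𝒯⁰₊ ⊕ 𝒯⁰₋ where 𝒯⁰₊ = (−V₊T₊⁻¹, −R₊; T₊⁻¹, 0) and 𝒯⁰₋ = (−V₋T₋⁻¹, −R₋; T₋⁻¹, 0), with R = (0, R₊; R₋, 0), V = (0, V₊; V₋, 0), T = (0, T₊; T₋, 0) in the grading of K. -/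
open Matrix

noncomputable section

/-- The chiral symmetry `K = diag(1_{L/2}, −1_{L/2})` on `ℂ^{2m}` (here `L = 2m`). -/
def chiralK (m : ℕ) : Matrix (Fin m ⊕ Fin m) (Fin m ⊕ Fin m) ℂ :=
  Matrix.fromBlocks 1 0 0 (-1)

/-- The doubled symmetry `K ⊗ σ₃ = diag(K, −K)` acting on `ℂ^{2L}`. -/
def chiralKSigma3 (m : ℕ) :
    Matrix ((Fin m ⊕ Fin m) ⊕ (Fin m ⊕ Fin m)) ((Fin m ⊕ Fin m) ⊕ (Fin m ⊕ Fin m)) ℂ :=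
  Matrix.fromBlocks (chiralK m) 0 0 (-(chiralK m))

/-- The permutation of coordinates regrouping the first and fourth, respectively
second and third, groups of `m` coordinates. -/
def regroup (m : ℕ) :
    ((Fin m ⊕ Fin m) ⊕ (Fin m ⊕ Fin m)) ≃ ((Fin m ⊕ Fin m) ⊕ (Fin m ⊕ Fin m)) where
  toFun x :=
    match x with
    | Sum.inl (Sum.inl i) => Sum.inl (Sum.inl i)
    | Sum.inl (Sum.inr i) => Sum.inr (Sum.inr i)
    | Sum.inr (Sum.inl i) => Sum.inl (Sum.inr i)
    | Sum.inr (Sum.inr i) => Sum.inr (Sum.inl i)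
  invFun x :=
    match x with
    | Sum.inl (Sum.inl i) => Sum.inl (Sum.inl i)
    | Sum.inl (Sum.inr i) => Sum.inr (Sum.inl i)
    | Sum.inr (Sum.inl i) => Sum.inr (Sum.inr i)
    | Sum.inr (Sum.inr i) => Sum.inl (Sum.inr i)
  left_inv := by rintro ((i | i) | (i | i)) <;> rfl
  right_inv := by rintro ((i | i) | (i | i)) <;> rfl

theorem chiral_zero_energy_transfer_decomposition (m : ℕ) (hm : 1 ≤ m)
    (Rp Rm Vp Vm Tp Tm : Matrix (Fin m) (Fin m) ℂ)
    (hRp : IsUnit Rp.det) (hRm : IsUnit Rm.det)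
    (hTp : IsUnit Tp.det) (hTm : IsUnit Tm.det) :
    letI R : Matrix (Fin m ⊕ Fin m) (Fin m ⊕ Fin m) ℂ := Matrix.fromBlocks 0 Rp Rm 0
    letI V : Matrix (Fin m ⊕ Fin m) (Fin m ⊕ Fin m) ℂ := Matrix.fromBlocks 0 Vp Vm 0
    letI T : Matrix (Fin m ⊕ Fin m) (Fin m ⊕ Fin m) ℂ := Matrix.fromBlocks 0 Tp Tm 0
    letI T0 := Matrix.fromBlocks ((-V) * T⁻¹) (-R) T⁻¹
      (0 : Matrix (Fin m ⊕ Fin m) (Fin m ⊕ Fin m) ℂ)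
    chiralKSigma3 m * T0 * chiralKSigma3 m = T0 ∧
      T0.submatrix (regroup m) (regroup m)
        = Matrix.fromBlocks
            (Matrix.fromBlocks ((-Vp) * Tp⁻¹) (-Rp) Tp⁻¹ (0 : Matrix (Fin m) (Fin m) ℂ))
            0 0
            (Matrix.fromBlocks ((-Vm) * Tm⁻¹) (-Rm) Tm⁻¹ (0 : Matrix (Fin m) (Fin m) ℂ)) := by
  have hTinv : (Matrix.fromBlocks 0 Tp Tm 0 : Matrix (Fin m ⊕ Fin m) (Fin m ⊕ Fin m) ℂ)⁻¹ = Matrix.fromBlocks 0 Tm⁻¹ Tp⁻¹ 0 := by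
    apply inv_eq_right_inv
    rw [Matrix.fromBlocks_multiply]
    simp [Matrix.mul_nonsing_inv _ hTp, Matrix.mul_nonsing_inv _ hTm,
      ← Matrix.fromBlocks_one]
  have hT0 : Matrix.fromBlocks
        (-Matrix.fromBlocks 0 Vp Vm 0 * (Matrix.fromBlocks 0 Tp Tm 0 : Matrix (Fin m ⊕ Fin m) (Fin m ⊕ Fin m) ℂ)⁻¹)
        (-Matrix.fromBlocks 0 Rp Rm 0)
        (Matrix.fromBlocks 0 Tp Tm 0 : Matrix (Fin m ⊕ Fin m) (Fin m ⊕ Fin m) ℂ)⁻¹ 0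
      = Matrix.fromBlocks
      (Matrix.fromBlocks (-Vp * Tp⁻¹) 0 0 (-Vm * Tm⁻¹))
      (Matrix.fromBlocks 0 (-Rp) (-Rm) 0)
      (Matrix.fromBlocks 0 Tm⁻¹ Tp⁻¹ 0) 0 := by
    rw [hTinv]
    simp [Matrix.neg_mul, Matrix.fromBlocks_multiply, Matrix.fromBlocks_neg]
  refine ⟨?_, ?_⟩
  · rw [hT0]
    simp [chiralKSigma3, chiralK, Matrix.fromBlocks_multiply, Matrix.fromBlocks_neg,
      Matrix.neg_mul, Matrix.mul_neg]
  · rw [hT0]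
    ext i j
    rcases i with (i | i) | (i | i) <;> rcases j with (j | j) | (j | j) <;>
      simp [regroup, Matrix.fromBlocks]
end
end

section
/- Let B ∈ Mat(M, ℂ) and r > 0 with no eigenvalue of B of modulus r, and let 𝓡 = (1/2πi)∮_{|z|=r} (z·1 − B)⁻¹ dz be the Riesz projection onto the eigenvalues inside the circle. Then 1 − 𝓡 equals the Riesz projection of B⁻¹ (when B is invertible) for the circle of radius r⁻¹: 1 − 𝓡 = (1/2πi)∮_{|z|=r⁻¹} (z·1 − B⁻¹)⁻¹ dz. -/
/-!
Substituting `z = w⁻¹` turns the contour integral of `(z - B⁻¹)⁻¹` over `|z| = r⁻¹` into that of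
`w⁻² (w⁻¹ - B⁻¹)⁻¹ = w⁻¹ - (w - B)⁻¹` over `|w| = r`, and the term `w⁻¹` contributes `2πi`.
-/

open Matrix

attribute [local instance] Matrix.linftyOpNormedAddCommGroup Matrix.linftyOpNormedRing
  Matrix.linftyOpNormedAlgebra

noncomputable section

open Complex Metric

theorem Function.Periodic.intervalIntegral_comp_neg {E : Type*} [NormedAddCommGroup E]
    [NormedSpace ℝ E] {f : ℝ → E} {T : ℝ} (hf : Function.Periodic f T) :
    ∫ θ in (0 : ℝ)..T, f (-θ) = ∫ θ in (0 : ℝ)..T, f θ := by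
  rw [intervalIntegral.integral_comp_neg, neg_zero]
  simpa using hf.intervalIntegral_add_eq (-T) 0

/-- The substitution `z = w⁻¹` reverses the orientation of the circle, which cancels the sign
in `dz = -w⁻² dw`. -/
theorem circleIntegral_inv_radius {E : Type*} [NormedAddCommGroup E] [NormedSpace ℂ E]
    (f : ℂ → E) (R : ℝ) :
    (∮ z in C(0, R⁻¹), f z) = ∮ w in C(0, R), (w ^ 2)⁻¹ • f w⁻¹ := by
  set G : ℝ → E := fun θ ↦
    deriv (circleMap 0 R) θ • ((circleMap 0 R θ ^ 2)⁻¹ • f (circleMap 0 R θ)⁻¹)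
  have hG : Function.Periodic G (2 * Real.pi) := fun θ ↦ by
    simp only [G, deriv_circleMap, periodic_circleMap 0 R θ]
  have hpoint : ∀ θ : ℝ, deriv (circleMap 0 R⁻¹) θ • f (circleMap 0 R⁻¹ θ) = G (-θ) := by
    intro θ
    have hz : circleMap 0 R⁻¹ θ = (circleMap 0 R (-θ))⁻¹ := by
      rw [circleMap_zero_inv, neg_neg]
    simp only [G, deriv_circleMap, smul_smul, hz]
    congr 1
    rcases eq_or_ne (circleMap 0 R (-θ)) 0 with h | h
    · simp [h]
    · field_simp
  simp only [circleIntegral, hpoint]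
  exact hG.intervalIntegral_comp_neg

namespace Matrix

variable {n K : Type*} [Fintype n] [DecidableEq n]

theorem isUnit_smul_one_sub_of_notMem_spectrum [CommRing K] {B : Matrix n n K} {z : K}
    (hz : z ∉ spectrum K B) : IsUnit (z • (1 : Matrix n n K) - B) := by
  rwa [spectrum.notMem_iff, Algebra.algebraMap_eq_smul_one] at hz

theorem continuousOn_inv_smul_one_sub [NormedField K] (B : Matrix n n K) :
    ContinuousOn (fun z : K ↦ (z • (1 : Matrix n n K) - B)⁻¹) (spectrum K B)ᶜ := by
  intro z hz
  have hdet : (z • (1 : Matrix n n K) - B).det ≠ 0 :=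
    ((isUnit_iff_isUnit_det _).mp (isUnit_smul_one_sub_of_notMem_spectrum hz)).ne_zero
  have hinv : ContinuousAt Inv.inv (z • (1 : Matrix n n K) - B) := by
    refine continuousAt_matrix_inv _ ?_
    simpa only [Ring.inverse_eq_inv'] using continuousAt_inv₀ hdet
  exact (hinv.comp (f := fun z : K ↦ z • (1 : Matrix n n K) - B) (by fun_prop)).continuousWithinAt

theorem inv_smul_one_sub_inv [Field K] {B : Matrix n n K} (hB : IsUnit B.det) {w : K}
    (hw : w ≠ 0) (hwB : w ∉ spectrum K B) :
    (w⁻¹ • (1 : Matrix n n K) - B⁻¹)⁻¹ = w • 1 - w ^ 2 • (w • (1 : Matrix n n K) - B)⁻¹ := by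
  set C := (w • (1 : Matrix n n K) - B)⁻¹
  have hC : w • C = 1 + B * C := by
    rw [← mul_nonsing_inv _ ((isUnit_iff_isUnit_det _).mp
      (isUnit_smul_one_sub_of_notMem_spectrum hwB)), sub_mul, smul_one_mul]
    abel
  have hBC : w • (B⁻¹ * C) = B⁻¹ + C := by
    rw [← mul_smul_comm, hC, mul_add, mul_one, ← mul_assoc, nonsing_inv_mul B hB, one_mul]
  have hBC2 : w ^ 2 • (B⁻¹ * C) = w • B⁻¹ + w • C := by rw [pow_two, mul_smul, hBC, smul_add]
  apply inv_eq_right_inv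
  simp only [sub_mul, mul_sub, smul_mul_assoc, mul_smul_comm, one_mul, mul_one, smul_sub,
    smul_smul]
  rw [hBC2, mul_inv_cancel₀ hw, one_smul, pow_two, mul_inv_cancel_right₀ hw]
  abel

theorem inv_sq_smul_inv_smul_one_sub_inv [Field K] {B : Matrix n n K} (hB : IsUnit B.det)
    {w : K} (hw : w ≠ 0) (hwB : w ∉ spectrum K B) :
    (w ^ 2)⁻¹ • (w⁻¹ • (1 : Matrix n n K) - B⁻¹)⁻¹
      = w⁻¹ • 1 - (w • (1 : Matrix n n K) - B)⁻¹ := by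
  rw [inv_smul_one_sub_inv hB hw hwB, smul_sub, smul_smul, smul_smul,
    inv_mul_cancel₀ (pow_ne_zero 2 hw), one_smul, pow_two, mul_inv, inv_mul_cancel_right₀ hw]

end Matrix

theorem riesz_projection_complement_general (M : ℕ)
    (B : Matrix (Fin M) (Fin M) ℂ) (hB : IsUnit B.det)
    (r : ℝ) (hr : 0 < r)
    (hspec : ∀ z ∈ spectrum ℂ B, ‖z‖ ≠ r) :
    (1 : Matrix (Fin M) (Fin M) ℂ)
        - (2 * Real.pi * Complex.I : ℂ)⁻¹
            • (∮ z in C(0, r), (z • (1 : Matrix (Fin M) (Fin M) ℂ) - B)⁻¹)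
      = (2 * Real.pi * Complex.I : ℂ)⁻¹
          • (∮ z in C(0, r⁻¹), (z • (1 : Matrix (Fin M) (Fin M) ℂ) - B⁻¹)⁻¹) := by
  have hsphere : sphere (0 : ℂ) r ⊆ (spectrum ℂ B)ᶜ := fun z hz hzB ↦
    hspec z hzB (mem_sphere_zero_iff_norm.mp hz)
  have hne : ∀ z ∈ sphere (0 : ℂ) r, z ≠ 0 := fun z hz ↦ ne_zero_of_mem_sphere hr.ne' ⟨z, hz⟩
  have hres : CircleIntegrable (fun z ↦ (z • (1 : Matrix (Fin M) (Fin M) ℂ) - B)⁻¹) 0 r :=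
    ((continuousOn_inv_smul_one_sub B).mono hsphere).circleIntegrable hr.le
  have hpole : CircleIntegrable (fun z : ℂ ↦ z⁻¹ • (1 : Matrix (Fin M) (Fin M) ℂ)) 0 r :=
    ((continuousOn_inv₀.mono hne).smul continuousOn_const).circleIntegrable hr.le
  have hwinding : (∮ z in C(0, r), z⁻¹) = 2 * Real.pi * Complex.I := by
    simpa using circleIntegral.integral_sub_center_inv 0 hr.ne'
  have h2πI : (2 * Real.pi * Complex.I : ℂ) ≠ 0 := by simp [Real.pi_ne_zero, I_ne_zero]
  rw [circleIntegral_inv_radius, circleIntegral.integral_congr hr.le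
      fun w hw ↦ inv_sq_smul_inv_smul_one_sub_inv hB (hne w hw) (hsphere hw),
    circleIntegral.integral_sub hpole hres, circleIntegral.integral_smul_const, hwinding,
    smul_sub, smul_smul, inv_mul_cancel₀ h2πI, one_smul]

theorem riesz_projection_complement (M : ℕ) (hM : 1 ≤ M)
    (B : Matrix (Fin M) (Fin M) ℂ) (hB : IsUnit B.det)
    (r : ℝ) (hr : 0 < r)
    (hspec : ∀ z ∈ spectrum ℂ B, ‖z‖ ≠ r) :
    (1 : Matrix (Fin M) (Fin M) ℂ)
        - (2 * Real.pi * Complex.I : ℂ)⁻¹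
            • (∮ z in C(0, r), (z • (1 : Matrix (Fin M) (Fin M) ℂ) - B)⁻¹)
      = (2 * Real.pi * Complex.I : ℂ)⁻¹
          • (∮ z in C(0, r⁻¹), (z • (1 : Matrix (Fin M) (Fin M) ℂ) - B⁻¹)⁻¹) :=
  riesz_projection_complement_general M B hB r hr hspec
end
end

section
/- For the scalar case L = 1 with T, R ∈ ℂ \ {0} and V ∈ ℂ, the set Λ = { E ∈ ℂ : the two eigenvalues of the 2×2 transfer matrix 𝒯^E have equal modulus } is exactly { E ∈ ℂ : (E − V)²/(R T) is real and lies in [0, 4] }. -/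
/-!
Writing `u = z₁ / z₂` for the ratio of the two eigenvalues, Vieta's formulas give
`(E - V)² / (R T) = (z₁ + z₂)² / (z₁ z₂) = u + 2 + u⁻¹`. The Joukowski map `u ↦ u + u⁻¹` sends
the unit circle onto `[-2, 2]` and no other point of `ℂ \ {0}` into it, so `‖z₁‖ = ‖z₂‖` exactly
when `(E - V)² / (R T) ∈ [0, 4]`.
-/

open Matrix

noncomputable section

namespace Matrix

variable {K : Type*} [Field K]

theorem mem_spectrum_fin_two_iff (a b c d z : K) :
    z ∈ spectrum K !![a, b; c, d] ↔ z ^ 2 - (a + d) * z + (a * d - b * c) = 0 := by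
  rw [spectrum.mem_iff, isUnit_iff_isUnit_det, isUnit_iff_ne_zero, not_not, det_fin_two]
  simp only [Algebra.algebraMap_eq_smul_one, sub_apply, smul_apply, one_apply_eq, smul_eq_mul,
    mul_one, of_apply, cons_val', cons_val_zero, cons_val_fin_one, cons_val_one, ne_eq, zero_ne_one,
    not_false_eq_true, one_apply_ne, mul_zero, zero_sub, one_ne_zero, mul_neg, neg_mul, neg_neg]
  ring_nf

theorem exists_spectrum_fin_two_eq_pair [IsAlgClosed K] (a b c d : K) :
    ∃ z₁ z₂ : K, z₁ + z₂ = a + d ∧ z₁ * z₂ = a * d - b * c ∧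
      spectrum K !![a, b; c, d] = {z₁, z₂} := by
  obtain ⟨z₁, hz₁⟩ := spectrum.nonempty_of_isAlgClosed_of_finiteDimensional K !![a, b; c, d]
  rw [mem_spectrum_fin_two_iff] at hz₁
  refine ⟨z₁, a + d - z₁, by ring, by linear_combination -hz₁, ?_⟩
  ext z
  rw [mem_spectrum_fin_two_iff, Set.mem_insert_iff, Set.mem_singleton_iff,
    ← sub_eq_zero (a := z), ← sub_eq_zero (a := z), ← mul_eq_zero]
  constructor <;> intro h
  · linear_combination h - hz₁
  · linear_combination h + hz₁

end Matrix

namespace Complex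

theorem norm_eq_one_iff_add_inv_eq_ofReal {u : ℂ} (hu : u ≠ 0) :
    ‖u‖ = 1 ↔ ∃ t : ℝ, u + u⁻¹ = t ∧ |t| ≤ 2 := by
  constructor
  · intro h
    refine ⟨2 * u.re, by rw [inv_eq_conj h, add_conj], ?_⟩
    have := h ▸ abs_re_le_norm u
    rw [abs_mul, abs_two]
    linarith
  · rintro ⟨t, ht, ht2⟩
    have hquad : u ^ 2 - t * u + 1 = 0 := by
      field_simp at ht
      linear_combination ht
    have hquad' : (starRingEnd ℂ) u ^ 2 - t * (starRingEnd ℂ) u + 1 = 0 := by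
      simpa using congrArg (starRingEnd ℂ) hquad
    -- `u` and `conj u` are both roots of `X² - t X + 1`, so either they coincide or they are the
    -- two roots, whose product is `1`.
    rcases mul_eq_zero.mp (show (u - (starRingEnd ℂ) u) * (u + (starRingEnd ℂ) u - t) = 0 by
      linear_combination hquad - hquad') with h | h
    · have hre : u = (u.re : ℂ) := (conj_eq_iff_re.mp (sub_eq_zero.mp h).symm).symm
      rw [hre] at hquad
      have hquad_re : u.re ^ 2 - t * u.re + 1 = 0 := by exact_mod_cast hquad
      have ht_sq : t ^ 2 ≤ 4 := by nlinarith [sq_abs t, abs_nonneg t]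
      have hre_sq : u.re ^ 2 = 1 := by nlinarith [sq_nonneg (2 * u.re - t)]
      rw [hre, norm_real, Real.norm_eq_abs, ← pow_eq_one_iff_of_nonneg (abs_nonneg _) two_ne_zero,
        sq_abs, hre_sq]
    · have hnormSq : normSq u = 1 := by
        apply ofReal_injective
        rw [← mul_conj, ofReal_one]
        linear_combination u * h - hquad
      rw [← pow_eq_one_iff_of_nonneg (norm_nonneg u) two_ne_zero, ← normSq_eq_norm_sq, hnormSq]

theorem norm_eq_norm_iff_sq_add_div_mul {z w : ℂ} (hz : z ≠ 0) (hw : w ≠ 0) :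
    ‖z‖ = ‖w‖ ↔ ∃ x : ℝ, (z + w) ^ 2 / (z * w) = x ∧ 0 ≤ x ∧ x ≤ 4 := by
  have hratio : (z + w) ^ 2 / (z * w) = z / w + (z / w)⁻¹ + 2 := by
    field_simp
    ring
  rw [← div_eq_one_iff_eq (norm_ne_zero_iff.mpr hw), ← norm_div,
    norm_eq_one_iff_add_inv_eq_ofReal (div_ne_zero hz hw), hratio]
  constructor
  · rintro ⟨t, ht, ht2⟩
    exact ⟨t + 2, by rw [ht]; push_cast; ring, by linarith [abs_le.mp ht2],
      by linarith [abs_le.mp ht2]⟩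
  · rintro ⟨x, hx, hx0, hx4⟩
    exact ⟨x - 2, by push_cast; linear_combination hx, abs_le.mpr ⟨by linarith, by linarith⟩⟩

end Complex

theorem lambda_set_hatano_nelson (T R V : ℂ) (hT : T ≠ 0) (hR : R ≠ 0) :
    {E : ℂ | ∀ z ∈ spectrum ℂ (!![(E - V) / T, -R; 1 / T, 0]),
        ∀ w ∈ spectrum ℂ (!![(E - V) / T, -R; 1 / T, 0]),
          ‖z‖ = ‖w‖}
      = {E : ℂ | ∃ x : ℝ, (E - V) ^ 2 / (R * T) = (x : ℂ) ∧ 0 ≤ x ∧ x ≤ 4} := by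
  ext E
  obtain ⟨z₁, z₂, hsum, hprod, hspec⟩ :=
    exists_spectrum_fin_two_eq_pair ((E - V) / T) (-R) (1 / T) 0
  replace hprod : z₁ * z₂ = R / T := by rw [hprod]; ring
  have hz₁ : z₁ ≠ 0 := left_ne_zero_of_mul (hprod ▸ div_ne_zero hR hT)
  have hz₂ : z₂ ≠ 0 := right_ne_zero_of_mul (hprod ▸ div_ne_zero hR hT)
  have hvieta : (E - V) ^ 2 / (R * T) = (z₁ + z₂) ^ 2 / (z₁ * z₂) := by
    rw [hsum, hprod, add_zero]
    field_simp
  simp only [Set.mem_ofPred_eq, hspec, hvieta, ← Complex.norm_eq_norm_iff_sq_add_div_mul hz₁ hz₂,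
    Set.mem_insert_iff, Set.mem_singleton_iff, forall_eq_or_imp, forall_eq]
  exact ⟨fun h ↦ h.1.2, fun h ↦ ⟨⟨trivial, h⟩, h.symm, trivial⟩⟩
end
end
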